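/- Let k ≥ 0 and let a : Fin (2k+2) → ℝ/ℤ be injective (2k+2 distinct points on the circle). Then Σ_{i=0}^{2k+1} (−1)^i · sgn(a ∘ δ_i) = 0, where δ_i : Fin (2k+1) → Fin (2k+2) is the i-th face map (the order-preserving injection omitting i), and sgn is the cyclic sign of an injective (2k+1)-tuple. -/

import Mathlib

/-
Sort the points into cyclic order by a permutation `π`. Cyclic orderings of an injective tuple
of odd length differ by a rotation, an even permutation, so `cycSgn` is the sign of any one of
them. Deleting the `i`-th point, `π⁻¹ ∘ δᵢ = δ_{π⁻¹ i} ∘ e` for a permutation `e` of sign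
`(-1)^(i + π⁻¹ i) sgn π⁻¹`, and `δ_{π⁻¹ i}` keeps the sorted tuple in cyclic order; so the `i`-th
term of the sum is `(-1)^(π⁻¹ i) sgn π⁻¹`, and the alternating sum over the even number `2k + 2`
of indices vanishes.
-/

noncomputable section
open Classical

instance : Fact ((0:ℝ) < 1) := ⟨one_pos⟩

/-- The circle `ℝ/ℤ`. -/
abbrev S1 := AddCircle (1 : ℝ)

/-- A tuple of points on the circle is in cyclic order if every increasing triple of
indices gives points in strict circular betweenness. -/
def InCyclicOrder {m : ℕ} (b : Fin m → S1) : Prop :=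
  ∀ i j l : Fin m, i < j → j < l → sbtw (b i) (b j) (b l)

/-- The cyclic sign of a tuple of points on the circle: the sign of any permutation
rearranging the tuple into cyclic order (well defined for injective tuples of odd
length). -/

noncomputable def cycSgn {m : ℕ} (a : Fin m → S1) : ℤ :=
  if h : ∃ σ : Equiv.Perm (Fin m), InCyclicOrder (a ∘ σ) then
    (Equiv.Perm.sign h.choose : ℤ)
  else 1

open Equiv Equiv.Perm

theorem AddCircle.sbtw_coe_of_lt {p : ℝ} [hp : Fact (0 < p)] {x y z : ℝ} (hxy : x < y)
    (hyz : y < z) (hzx : z < x + p) : sbtw (x : AddCircle p) y z := by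
  have hy : toIcoMod hp.out x y = y := (toIcoMod_eq_self hp.out).2 ⟨hxy.le, by linarith⟩
  have hz : toIocMod hp.out x z = z := (toIocMod_eq_self hp.out).2 ⟨by linarith, by linarith⟩
  have hy' : toIcoMod hp.out z y = y + p :=
    (toIcoMod_eq_iff hp.out).2 ⟨⟨by linarith, by linarith⟩, -1, by simp⟩
  have hx' : toIocMod hp.out z x = x + p :=
    (toIocMod_eq_iff hp.out).2 ⟨⟨by linarith, by linarith⟩, -1, by simp⟩
  rw [sbtw_iff_btw_not_btw]
  show Btw.btw (x : ℝ ⧸ AddSubgroup.zmultiples p) y z ∧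
    ¬Btw.btw (z : ℝ ⧸ AddSubgroup.zmultiples p) y x
  rw [QuotientAddGroup.btw_coe_iff, QuotientAddGroup.btw_coe_iff, hy, hz, hy', hx']
  constructor <;> [exact hyz.le; exact fun h => by linarith]

theorem InCyclicOrder.comp_strictMono {l m : ℕ} {c : Fin m → S1} (hc : InCyclicOrder c)
    {f : Fin l → Fin m} (hf : StrictMono f) : InCyclicOrder (c ∘ f) :=
  fun _ _ _ hij hjl => hc _ _ _ (hf hij) (hf hjl)

theorem exists_perm_inCyclicOrder {m : ℕ} {b : Fin m → S1} (hb : Function.Injective b) :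
    ∃ σ : Perm (Fin m), InCyclicOrder (b ∘ σ) := by
  set r : Fin m → ℝ := fun i => AddCircle.equivIco 1 0 (b i)
  have hr_mem : ∀ i, r i ∈ Set.Ico (0 : ℝ) (0 + 1) := fun i => (AddCircle.equivIco 1 0 (b i)).2
  have hr_coe : ∀ i, (r i : S1) = b i := fun i => AddCircle.coe_equivIco
  have hr_inj : Function.Injective r := fun i j h => hb (by rw [← hr_coe i, ← hr_coe j, h])
  have hmono : StrictMono (r ∘ Tuple.sort r) :=
    (Tuple.monotone_sort r).strictMono_of_injective (hr_inj.comp (Equiv.injective _))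
  refine ⟨Tuple.sort r, fun i j l hij hjl => ?_⟩
  simp only [Function.comp_apply, ← hr_coe]
  refine AddCircle.sbtw_coe_of_lt (hmono hij) (hmono hjl) ?_
  linarith [(hr_mem (Tuple.sort r l)).2, (hr_mem (Tuple.sort r i)).1]

theorem InCyclicOrder.sbtw_apply {m : ℕ} {c : Fin m → S1} (hc : InCyclicOrder c)
    {x y z : Fin m} (h : sbtw x y z) : sbtw (c x) (c y) (c z) := by
  rcases Fin.sbtw_iff.1 h with ⟨h₁, h₂⟩ | ⟨h₁, h₂⟩ | ⟨h₁, h₂⟩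
  · exact hc x y z h₁ h₂
  · exact sbtw_cyclic_right (hc y z x h₁ h₂)
  · exact sbtw_cyclic_left (hc z x y h₁ h₂)

theorem sbtw_of_sbtw_apply {α β : Type*} [CircularOrder α] [CircularPreorder β] {f : α → β}
    (hf : ∀ {x y z}, sbtw x y z → sbtw (f x) (f y) (f z)) {x y z : α}
    (h : sbtw (f x) (f y) (f z)) : sbtw x y z := by
  rw [sbtw_iff_not_btw]
  intro hzyx
  have hxyz : btw x y z := btw_iff_not_sbtw.2 fun h' => sbtw_asymm h (hf h')
  rcases hxyz.antisymm hzyx with rfl | rfl | rfl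
  · exact sbtw_irrefl_left h
  · exact sbtw_irrefl_right h
  · exact sbtw_irrefl_left_right h

theorem Fin.sbtw_add_right {n : ℕ} {x y z : Fin n} (t : Fin n) (h : sbtw x y z) :
    sbtw (x + t) (y + t) (z + t) := by
  have hval (u : Fin n) : ((u + t : Fin n) : ℕ) = u + t ∨ ((u + t : Fin n) : ℕ) + n = u + t := by
    rw [Fin.val_add_eq_ite]; split_ifs <;> omega
  have := hval x; have := hval y; have := hval z
  have := (x + t).isLt; have := (y + t).isLt; have := (z + t).isLt
  simp only [Fin.sbtw_iff, Fin.lt_def] at h ⊢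
  -- left in place, `↑(x + t)` would be read by `omega` as a `%` by the variable `n`
  generalize ((x + t : Fin n) : ℕ) = X at *
  generalize ((y + t : Fin n) : ℕ) = Y at *
  generalize ((z + t : Fin n) : ℕ) = Z at *
  omega

/-- Shifted to fix `0`, such a permutation is strictly monotone, hence the identity. -/
theorem Fin.eq_addRight_of_sbtw {n : ℕ} (σ : Perm (Fin (n + 1)))
    (hσ : ∀ {x y z}, sbtw x y z → sbtw (σ x) (σ y) (σ z)) : σ = Equiv.addRight (σ 0) := by
  set τ : Fin (n + 1) → Fin (n + 1) := fun x => σ x + -σ 0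
  have hτ0 : τ 0 = 0 := add_neg_cancel _
  have hτ : StrictMono τ := by
    intro x y hxy
    rcases eq_or_ne x 0 with rfl | hx
    · rw [hτ0]
      refine Fin.pos_of_ne_zero fun hy => hxy.ne' (σ.injective ?_)
      simpa [τ, add_neg_eq_zero] using hy
    · have h := Fin.sbtw_add_right (-σ 0) (hσ (Fin.sbtw_iff.2 (.inl ⟨Fin.pos_of_ne_zero hx, hxy⟩)))
      change sbtw (τ 0) (τ x) (τ y) at h
      rw [hτ0, Fin.sbtw_iff] at h
      rcases h with ⟨_, h⟩ | ⟨h, _⟩ | ⟨h, _⟩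
      · exact h
      · exact h
      · exact absurd h (Fin.not_lt_zero _)
  exact Equiv.ext fun x => add_neg_eq_iff_eq_add.1 (congrFun hτ.eq_id x)

open Fin.NatCast in
theorem Fin.sign_addRight {n : ℕ} (hn : Even n) (t : Fin (n + 1)) :
    sign (Equiv.addRight t) = 1 := by
  have hrot : Equiv.addRight (1 : Fin (n + 1)) = finRotate (n + 1) := by
    ext x; simp [finRotate_apply]
  rw [← Fin.cast_val_eq_self t, ← nsmul_one, ← nsmul_addRight, hrot, map_pow, sign_finRotate,
    Nat.add_sub_cancel, hn.neg_one_pow, one_pow]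

theorem cycSgn_eq_sign {n : ℕ} (hn : Even n) {b : Fin (n + 1) → S1} {τ : Perm (Fin (n + 1))}
    (hτ : InCyclicOrder (b ∘ τ)) : cycSgn b = sign τ := by
  have hex : ∃ σ : Perm (Fin (n + 1)), InCyclicOrder (b ∘ σ) := ⟨τ, hτ⟩
  rw [cycSgn, dif_pos hex]
  set σ := hex.choose
  have hρ : ∀ {x y z}, sbtw x y z → sbtw ((τ⁻¹ * σ) x) ((τ⁻¹ * σ) y) ((τ⁻¹ * σ) z) :=
    fun h => sbtw_of_sbtw_apply hτ.sbtw_apply (by simpa using hex.choose_spec.sbtw_apply h)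
  have hσ : σ = τ * Equiv.addRight ((τ⁻¹ * σ) 0) := by
    rw [← Fin.eq_addRight_of_sbtw _ hρ, mul_inv_cancel_left]
  rw [hσ, map_mul, Fin.sign_addRight hn, mul_one]

theorem Equiv.Perm.exists_apply_succAbove_eq {n : ℕ} (π : Perm (Fin (n + 1))) (i : Fin (n + 1)) :
    ∃ e : Perm (Fin n), (∀ x, π (i.succAbove x) = (π i).succAbove (e x)) ∧
      sign e = (-1) ^ (i : ℕ) * (-1) ^ (π i : ℕ) * sign π := by
  set ρ : Perm (Fin (n + 1)) := (π i).cycleRange * π * i.cycleRange.symm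
  set e := (decomposeFin ρ).2
  have hρ0 : (decomposeFin ρ).1 = 0 := by
    have h := decomposeFin_symm_apply_zero (decomposeFin ρ).1 e
    rwa [Prod.mk.eta, decomposeFin.symm_apply_apply, Perm.mul_apply, Perm.mul_apply,
      Fin.cycleRange_symm_zero, Fin.cycleRange_self, eq_comm] at h
  have hρ : decomposeFin.symm (0, e) = ρ := by
    rw [← hρ0, Prod.mk.eta, decomposeFin.symm_apply_apply]
  refine ⟨e, fun x => ?_, ?_⟩
  · have hx : ρ x.succ = (e x).succ := by
      rw [← hρ, decomposeFin_symm_apply_succ, swap_self, Equiv.refl_apply]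
    simpa [ρ, Perm.mul_apply] using congrArg (π i).cycleRange.symm hx
  · have hsign := congrArg sign hρ
    rw [decomposeFin.symm_sign, if_pos rfl, one_mul] at hsign
    rw [hsign]
    simp only [ρ, sign_mul, sign_symm, Fin.sign_cycleRange]
    ac_rfl

theorem cycSgn_comp_succAbove {n : ℕ} (hn : Even n) {a : Fin (n + 2) → S1}
    {π : Perm (Fin (n + 2))} (hπ : InCyclicOrder (a ∘ π)) (i : Fin (n + 2)) :
    cycSgn (a ∘ i.succAbove) = (-1) ^ (i : ℕ) * (-1) ^ (π.symm i : ℕ) * (sign π.symm : ℤ) := by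
  obtain ⟨e, he, hsign⟩ := Perm.exists_apply_succAbove_eq π.symm i
  have hface : (a ∘ i.succAbove) ∘ e.symm = (a ∘ π) ∘ (π.symm i).succAbove := by
    funext x
    conv_rhs => rw [Function.comp_apply, Function.comp_apply, ← e.apply_symm_apply x, ← he,
      π.apply_symm_apply]
    rfl
  rw [cycSgn_eq_sign hn (hface ▸ hπ.comp_strictMono (Fin.strictMono_succAbove _)), sign_symm,
    hsign]
  push_cast
  rfl

/-- The alternating sum of cyclic signs over the faces of an injective `(2k+2)`-tuple
vanishes. Here `i.succAbove : Fin (2k+1) → Fin (2k+2)` is the `i`-th coface map. -/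
theorem stmt3 (k : ℕ) (a : Fin (2 * k + 2) → S1) (ha : Function.Injective a) :
    ∑ i : Fin (2 * k + 2), (-1 : ℤ) ^ (i : ℕ) * cycSgn (a ∘ i.succAbove) = 0 := by
  obtain ⟨π, hπ⟩ := exists_perm_inCyclicOrder ha
  have hterm (i : Fin (2 * k + 2)) : (-1 : ℤ) ^ (i : ℕ) * cycSgn (a ∘ i.succAbove) =
      (-1) ^ (π.symm i : ℕ) * sign π.symm := by
    rw [cycSgn_comp_succAbove (even_two_mul k) hπ, ← mul_assoc, ← mul_assoc, ← pow_add,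
      Even.neg_one_pow ⟨_, rfl⟩, one_mul]
  rw [Finset.sum_congr rfl fun i _ => hterm i, ← Finset.sum_mul,
    Equiv.sum_comp π.symm fun j => (-1 : ℤ) ^ (j : ℕ), Fin.sum_neg_one_pow,
    if_pos (by simp [parity_simps]), zero_mul]
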